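/- The Dean word 0103010 cannot be extended to a Dean word on both sides by arbitrarily much: there is a bound N such that there is no Dean word of the form u·0103010·v with |u| ≥ N and |v| ≥ N. -/
import Mathlib


def SqFree {α : Type*} (w : List α) : Prop :=
  ∀ v : List α, v ≠ [] → ¬ (v ++ v) <:+: w

def Reduced (w : List (Fin 4)) : Prop :=
  ∀ p ∈ ([[0,2],[2,0],[1,3],[3,1]] : List (List (Fin 4))), ¬ p <:+: w

def DeanWord (w : List (Fin 4)) : Prop := Reduced w ∧ SqFree w

def IFactor {α : Type*} (v : List α) (w : ℕ → α) : Prop :=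
  ∃ i, v = (List.range v.length).map fun k => w (i + k)

def ISqFree {α : Type*} (w : ℕ → α) : Prop :=
  ∀ v : List α, v ≠ [] → ¬ IFactor (v ++ v) w

def IReduced (w : ℕ → Fin 4) : Prop :=
  ∀ p ∈ ([[0,2],[2,0],[1,3],[3,1]] : List (List (Fin 4))), ¬ IFactor p w

def IDean (w : ℕ → Fin 4) : Prop := IReduced w ∧ ISqFree w

theorem stmt18 :
    ∃ N : ℕ, ∀ u v : List (Fin 4), N ≤ u.length → N ≤ v.length →
      ¬ DeanWord (u ++ ([0,1,0,3,0,1,0] : List (Fin 4)) ++ v) := by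
  use 1
  intro u v hu _ ⟨hred, hsq⟩
  have hne : u ≠ [] := by intro h; simp [h] at hu
  obtain ⟨u', a, rfl⟩ : ∃ u' a, u = u' ++ [a] := ⟨u.dropLast, u.getLast hne, (List.dropLast_append_getLast hne).symm⟩
  have key : ([a] ++ ([0,1,0,3,0,1,0] : List (Fin 4))) <:+:
      (u' ++ [a]) ++ ([0,1,0,3,0,1,0] : List (Fin 4)) ++ v :=
    ⟨u', v, by simp⟩
  fin_cases a
  · exact hsq [0] (by simp) (List.IsInfix.trans (by decide) key)
  · exact hsq [1,0] (by simp) (List.IsInfix.trans (by decide) key)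
  · exact hred [2,0] (by simp) (List.IsInfix.trans (by decide) key)
  · exact hsq [3,0,1,0] (by simp) (List.IsInfix.trans (by decide) key)
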